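/- Variance reduction with the same total sample size (RL setting): for every k, t ∈ {0,…,T−1}, and s ∈ 𝒮, if for all k, t, s: sqrt(η̄_t/η̲_t) (Σ_a π^(k)_t(a|s) sqrt(ĥq_{π^(k),t}(s,a)))² − (1 − n_k/n) Δ^(k)_t(s) ≤ Σ_a π^(k)_t(a|s) ĥq_{π^(k),t}(s,a), where Δ^(k)_t(s) = E_{A~ĥμ_t(·|s)}[(ρ^{π^(k),ĥμ}_t)² ν_{π^(k),t}(s,A)] + V_{A~ĥμ_t(·|s)}(ρ^{π^(k),ĥμ}_t q_{π^(k),t}(s,A)), then V(E^{off,π^(k)}_{t:T−1} | S_t = s) ≤ V(E^{on,π^(k)}_{t:T−1} | S_t = s), i.e., (1/n) V(G^PDIS_k(τ^{ĥμ_{t:T−1}}_{t:T−1}) | S_t = s) ≤ (1/n_k) V(G^PDIS_k(τ^{π^(k)_{t:T−1}}_{t:T−1}) | S_t = s). -/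

import Mathlib

open Finset

section RL

variable {S A : Type*}

/-- Expectation, over the random trajectory of length `h` generated from time `t` and state `s`
by the behavior policy `μ` in the MDP with transition kernel `p`, of a functional `f` of the
trajectory (recorded as the list of successive (action, next-state) pairs).  This is the finite
sum over all trajectories weighted by their probabilities; trajectories of zero probability
contribute `0`. -/
noncomputable def Etraj [Fintype S] [Fintype A] (p : S → A → S → ℝ)
    (μ : ℕ → S → A → ℝ) : ℕ → ℕ → S → (List (A × S) → ℝ) → ℝ
  | 0, _, _, f => f []
  | h + 1, t, s, f =>
      ∑ a : A, ∑ s' : S,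
        μ t s a * p s a s' * Etraj p μ h (t + 1) s' (fun l => f ((a, s') :: l))

/-- Total (undiscounted) reward `Σ_i R_{i+1}` along a trajectory starting from state `s`. -/
noncomputable def retF (r : S → A → ℝ) : S → List (A × S) → ℝ
  | _, [] => 0
  | s, (a, s') :: l => r s a + retF r s' l

/-- The PDIS return `G^PDIS(τ^{μ_{t:T-1}}_{t:T-1}) = Σ_i (∏_{j=t}^i ρ^{π,μ}_j) R_{i+1}` of a
trajectory starting at time `t` in state `s`, with target policy `π` and behavior policy `μ`,
in its recursive form. -/
noncomputable def pdisF (r : S → A → ℝ) (π μ : ℕ → S → A → ℝ) :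
    ℕ → S → List (A × S) → ℝ
  | _, _, [] => 0
  | t, s, (a, s') :: l => π t s a / μ t s a * (r s a + pdisF r π μ (t + 1) s' l)

/-- State value function `v_{π,t}(s) = E_π[Σ_{i=t+1}^T R_i | S_t = s]` for horizon `T`. -/
noncomputable def vval [Fintype S] [Fintype A] (p : S → A → S → ℝ) (r : S → A → ℝ)
    (π : ℕ → S → A → ℝ) (T t : ℕ) (s : S) : ℝ :=
  Etraj p π (T - t) t s (retF r s)

/-- Action value function `q_{π,t}(s,a) = E_π[Σ_{i=t+1}^T R_i | S_t = s, A_t = a]`. -/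
noncomputable def qval [Fintype S] [Fintype A] (p : S → A → S → ℝ) (r : S → A → ℝ)
    (π : ℕ → S → A → ℝ) (T t : ℕ) (s : S) (a : A) : ℝ :=
  r s a + ∑ s' : S, p s a s' * vval p r π T (t + 1) s'

/-- Conditional expectation `E[G^PDIS(τ^{μ_{t:T-1}}_{t:T-1}) | S_t = s]`. -/
noncomputable def Epdis [Fintype S] [Fintype A] (p : S → A → S → ℝ) (r : S → A → ℝ)
    (π μ : ℕ → S → A → ℝ) (T t : ℕ) (s : S) : ℝ :=
  Etraj p μ (T - t) t s (pdisF r π μ t s)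

/-- Conditional variance `V(G^PDIS(τ^{μ_{t:T-1}}_{t:T-1}) | S_t = s)`. -/
noncomputable def Vpdis [Fintype S] [Fintype A] (p : S → A → S → ℝ) (r : S → A → ℝ)
    (π μ : ℕ → S → A → ℝ) (T t : ℕ) (s : S) : ℝ :=
  Etraj p μ (T - t) t s (fun l => pdisF r π μ t s l ^ 2) - Epdis p r π μ T t s ^ 2

/-- `ν_{π,t}(s,a) = V_{S'~p(·|s,a)}(v_{π,t+1}(S'))` for `t ≤ T-2`, and `ν_{π,T-1}(s,a) = 0`. -/
noncomputable def nuval [Fintype S] [Fintype A] (p : S → A → S → ℝ) (r : S → A → ℝ)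
    (π : ℕ → S → A → ℝ) (T t : ℕ) (s : S) (a : A) : ℝ :=
  if t = T - 1 then 0
  else (∑ s' : S, p s a s' * vval p r π T (t + 1) s' ^ 2)
       - (∑ s' : S, p s a s' * vval p r π T (t + 1) s') ^ 2

/-- The variance-augmented action value `ĥq_{π,t}(s,a)`:
`ĥq_{π,T-1}(s,a) = q_{π,T-1}(s,a)²` and, for `t ≤ T-2`,
`ĥq_{π,t}(s,a) = q_{π,t}(s,a)² + ν_{π,t}(s,a) + Σ_{s'} p(s'|s,a) V(G^PDIS(τ^{π_{t+1:T-1}}) | S_{t+1}=s')`. -/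
noncomputable def hq [Fintype S] [Fintype A] (p : S → A → S → ℝ) (r : S → A → ℝ)
    (π : ℕ → S → A → ℝ) (T t : ℕ) (s : S) (a : A) : ℝ :=
  if t = T - 1 then qval p r π T t s a ^ 2
  else qval p r π T t s a ^ 2 + nuval p r π T t s a
       + ∑ s' : S, p s a s' * Vpdis p r π π T (t + 1) s'

/-- The tailored behavior policy `ĥμ_t(a|s) ∝ sqrt(Σ_k π^(k)_t(a|s)² ĥq_{π^(k),t}(s,a))`,
normalized over `a ∈ 𝒜` (uniform on `𝒜` if all the weights vanish). -/
noncomputable def hmu [Fintype S] [Fintype A] (p : S → A → S → ℝ) (r : S → A → ℝ)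
    (K : ℕ) (π : Fin K → ℕ → S → A → ℝ) (T t : ℕ) (s : S) (a : A) : ℝ :=
  if (∑ b : A, Real.sqrt (∑ k : Fin K, π k t s b ^ 2 * hq p r (π k) T t s b)) = 0 then
    (Fintype.card A : ℝ)⁻¹
  else
    Real.sqrt (∑ k : Fin K, π k t s a ^ 2 * hq p r (π k) T t s a) /
      ∑ b : A, Real.sqrt (∑ k : Fin K, π k t s b ^ 2 * hq p r (π k) T t s b)

/-- `w^(k)_t(s,a) = π^(k)_t(a|s)² ĥq_{π^(k),t}(s,a)`. -/
noncomputable def wRL [Fintype S] [Fintype A] (p : S → A → S → ℝ) (r : S → A → ℝ)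
    (K : ℕ) (π : Fin K → ℕ → S → A → ℝ) (T : ℕ) (k : Fin K) (t : ℕ) (s : S) (a : A) : ℝ :=
  π k t s a ^ 2 * hq p r (π k) T t s a

/-- `η^(k)_t(s,a) = w^(k)_t(s,a) / w̄_t(s,a)` with `w̄_t(s,a) = (1/K) Σ_j w^(j)_t(s,a)`. -/
noncomputable def etaRL [Fintype S] [Fintype A] (p : S → A → S → ℝ) (r : S → A → ℝ)
    (K : ℕ) (π : Fin K → ℕ → S → A → ℝ) (T : ℕ) (k : Fin K) (t : ℕ) (s : S) (a : A) : ℝ :=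
  wRL p r K π T k t s a / ((∑ j : Fin K, wRL p r K π T j t s a) / K)

/-- `η̲_t = min_{k,s,a} η^(k)_t(s,a)`. -/
noncomputable def etaLoRL [Fintype S] [Fintype A] (p : S → A → S → ℝ) (r : S → A → ℝ)
    (K : ℕ) (π : Fin K → ℕ → S → A → ℝ) (T t : ℕ) : ℝ :=
  ⨅ x : Fin K × S × A, etaRL p r K π T x.1 t x.2.1 x.2.2

/-- `η̄_t = max_{k,s,a} η^(k)_t(s,a)`. -/
noncomputable def etaHiRL [Fintype S] [Fintype A] (p : S → A → S → ℝ) (r : S → A → ℝ)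
    (K : ℕ) (π : Fin K → ℕ → S → A → ℝ) (T t : ℕ) : ℝ :=
  ⨆ x : Fin K × S × A, etaRL p r K π T x.1 t x.2.1 x.2.2

end RL

/-- `Δ^(k)_t(s) = E_{A~ĥμ_t(·|s)}[(ρ^{π^(k),ĥμ}_t)² ν_{π^(k),t}(s,A)]
  + V_{A~ĥμ_t(·|s)}(ρ^{π^(k),ĥμ}_t q_{π^(k),t}(s,A))`. -/
noncomputable def DeltaRL {S A : Type*} [Fintype S] [Fintype A]
    (p : S → A → S → ℝ) (r : S → A → ℝ)
    (K : ℕ) (π : Fin K → ℕ → S → A → ℝ) (T : ℕ) (k : Fin K) (t : ℕ) (s : S) : ℝ :=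
  (∑ a : A, hmu p r K π T t s a *
      ((π k t s a / hmu p r K π T t s a) ^ 2 * nuval p r (π k) T t s a))
  + ((∑ a : A, hmu p r K π T t s a *
        (π k t s a / hmu p r K π T t s a * qval p r (π k) T t s a) ^ 2)
     - (∑ a : A, hmu p r K π T t s a *
        (π k t s a / hmu p r K π T t s a * qval p r (π k) T t s a)) ^ 2)

/-!
Conditioning on the first step gives the backward recursion
`V_μ(t,s) = Σ_a μ ρ_t² (q² + ν + E_{s'} V_μ(t+1,s')) - v(t,s)²` for the PDIS variance, which for
`μ = π` reads `V_π(t,s) = Σ_a π ĥq - v²` and for `μ = ĥμ` is `Δ` plus a tail of next-step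
variances. Since `ĥμ` is proportional to `sqrt(K w̄)` and `η̲ w̄ ≤ w^(k) ≤ η̄ w̄`, the term
`Σ_a ĥμ ρ_t² ĥq = Σ_a w^(k)/ĥμ` is at most `sqrt(η̄/η̲) (Σ_a π sqrt ĥq)²`. With the similarity
condition this gives `n_k V_ĥμ(t) ≤ n V_π(t)` from the same inequality at `t + 1`, by backward
induction from `V = 0` at time `T`.
-/
theorem sum_mul_add_sq {ι : Type*} (s : Finset ι) {w : ι → ℝ} (hw : ∑ i ∈ s, w i = 1)
    (c : ℝ) (g : ι → ℝ) :
    ∑ i ∈ s, w i * (c + g i) ^ 2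
      = (c + ∑ i ∈ s, w i * g i) ^ 2 + (∑ i ∈ s, w i * g i ^ 2 - (∑ i ∈ s, w i * g i) ^ 2) := by
  have e : ∀ i, w i * (c + g i) ^ 2 = c ^ 2 * w i + 2 * c * (w i * g i) + w i * g i ^ 2 :=
    fun i => by ring
  simp only [e, sum_add_distrib, ← mul_sum, hw]
  ring

theorem sum_div_normalized_sqrt_le {ι : Type*} [Fintype ι] {w D : ι → ℝ} {c lo hi : ℝ}
    (hc : 0 < c) (hlo : 0 < lo) (hD : ∀ i, 0 < D i)
    (hlow : ∀ i, lo ≤ w i * c / D i) (hhigh : ∀ i, w i * c / D i ≤ hi) :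
    ∑ i, w i / (√(D i) / ∑ j, √(D j)) ≤ √(hi / lo) * (∑ i, √(w i)) ^ 2 := by
  have hlow' : ∀ i, lo * D i ≤ w i * c := fun i => (le_div_iff₀ (hD i)).1 (hlow i)
  have hhigh' : ∀ i, w i * c ≤ hi * D i := fun i => (div_le_iff₀ (hD i)).1 (hhigh i)
  have hw : ∀ i, 0 ≤ w i := fun i => by nlinarith [hlow' i, hD i]
  have hsqrtD : ∀ i, √(D i) ≤ √(c / lo) * √(w i) := fun i => by
    rw [← Real.sqrt_mul (div_nonneg hc.le hlo.le)]
    gcongr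
    rw [div_mul_eq_mul_div, le_div_iff₀ hlo]
    linarith [hlow' i]
  have hdiv : ∀ i, w i / √(D i) ≤ √(hi / c) * √(w i) := fun i => by
    calc w i / √(D i) = √(w i / D i) * √(w i) := by
          rw [Real.sqrt_div (hw i), div_mul_eq_mul_div, Real.mul_self_sqrt (hw i)]
      _ ≤ √(hi / c) * √(w i) := by
          refine mul_le_mul_of_nonneg_right (Real.sqrt_le_sqrt ?_) (Real.sqrt_nonneg _)
          rw [div_le_div_iff₀ (hD i) hc]
          linarith [hhigh' i]
  have hsqrt : √(c / lo) * √(hi / c) = √(hi / lo) := by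
    rw [← Real.sqrt_mul (div_nonneg hc.le hlo.le)]
    congr 1
    field_simp
  simp_rw [div_div_eq_mul_div, mul_div_right_comm _ (∑ j, √(D j)), ← sum_mul]
  calc (∑ i, w i / √(D i)) * ∑ j, √(D j)
      ≤ (√(hi / c) * ∑ i, √(w i)) * (√(c / lo) * ∑ i, √(w i)) := by
        refine mul_le_mul ?_ ?_ (sum_nonneg fun i _ => Real.sqrt_nonneg _)
          (mul_nonneg (Real.sqrt_nonneg _) (sum_nonneg fun i _ => Real.sqrt_nonneg _))
        · rw [mul_sum]
          exact sum_le_sum fun i _ => hdiv i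
        · rw [mul_sum]
          exact sum_le_sum fun i _ => hsqrtD i
    _ = √(hi / lo) * (∑ i, √(w i)) ^ 2 := by
        rw [← hsqrt]
        ring

def IsPolicy {S A : Type*} [Fintype A] (μ : ℕ → S → A → ℝ) (T : ℕ) : Prop :=
  ∀ i (s : S), i < T → (∀ a, 0 ≤ μ i s a) ∧ ∑ a : A, μ i s a = 1

section Trajectories

variable {S A : Type*} [Fintype S] [Fintype A] {p : S → A → S → ℝ} {μ : ℕ → S → A → ℝ}

theorem Etraj_add (h t : ℕ) (s : S) (f g : List (A × S) → ℝ) :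
    Etraj p μ h t s (fun l => f l + g l) = Etraj p μ h t s f + Etraj p μ h t s g := by
  induction h generalizing t s f g with
  | zero => rfl
  | succ h ih => simp only [Etraj, ih, mul_add, sum_add_distrib]

theorem Etraj_const_mul (c : ℝ) (h t : ℕ) (s : S) (f : List (A × S) → ℝ) :
    Etraj p μ h t s (fun l => c * f l) = c * Etraj p μ h t s f := by
  induction h generalizing t s f with
  | zero => rfl
  | succ h ih => simp only [Etraj, ih, mul_sum, mul_left_comm c]

theorem Etraj_const (hp1 : ∀ s a, ∑ s' : S, p s a s' = 1) {T : ℕ} (hμ : IsPolicy μ T)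
    (c : ℝ) {h t : ℕ} (ht : t + h ≤ T) (s : S) :
    Etraj p μ h t s (fun _ => c) = c := by
  induction h generalizing t s with
  | zero => rfl
  | succ h ih =>
    have ih' : ∀ s', Etraj p μ h (t + 1) s' (fun _ => c) = c := ih (by omega)
    simp only [Etraj, ih', ← sum_mul, ← mul_sum, hp1, mul_one, (hμ t s (by omega)).2, one_mul]

theorem Etraj_sq_const_mul_add (hp1 : ∀ s a, ∑ s' : S, p s a s' = 1) {T : ℕ}
    (hμ : IsPolicy μ T) {h t : ℕ} (ht : t + h ≤ T) (s : S) (c d : ℝ) (f : List (A × S) → ℝ) :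
    Etraj p μ h t s (fun l => (c * (d + f l)) ^ 2)
      = c ^ 2 * ((d + Etraj p μ h t s f) ^ 2
          + (Etraj p μ h t s (fun l => f l ^ 2) - Etraj p μ h t s f ^ 2)) := by
  have e : ∀ l, (c * (d + f l)) ^ 2 = c ^ 2 * d ^ 2 + ((2 * c ^ 2 * d) * f l + c ^ 2 * f l ^ 2) :=
    fun l => by ring
  simp only [e, Etraj_add, Etraj_const_mul, Etraj_const hp1 hμ _ ht]
  ring

theorem Etraj_sub_eq_sum {T t : ℕ} (ht : t < T) (s : S) (f : List (A × S) → ℝ) :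
    Etraj p μ (T - t) t s f = ∑ a : A, ∑ s' : S,
      μ t s a * p s a s' * Etraj p μ (T - (t + 1)) (t + 1) s' (fun l => f ((a, s') :: l)) := by
  obtain ⟨h, hh, hh'⟩ : ∃ h, T - t = h + 1 ∧ T - (t + 1) = h := ⟨T - (t + 1), by omega, rfl⟩
  rw [hh, hh']
  rfl

end Trajectories

section Values

variable {S A : Type*} [Fintype S] [Fintype A] {p : S → A → S → ℝ} {r : S → A → ℝ}
  {π μ : ℕ → S → A → ℝ} {T : ℕ}

theorem vval_self (s : S) : vval p r π T T s = 0 := by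
  simp [vval, Etraj, retF]

theorem Vpdis_self (s : S) : Vpdis p r π μ T T s = 0 := by
  simp [Vpdis, Epdis, Etraj, pdisF]

theorem Etraj_pdisF (hp1 : ∀ s a, ∑ s' : S, p s a s' = 1) (hπ : IsPolicy π T)
    (hμ : IsPolicy μ T) (hμπ : ∀ i s a, i < T → μ i s a = 0 → π i s a = 0)
    {h t : ℕ} (ht : t + h ≤ T) (s : S) :
    Etraj p μ h t s (pdisF r π μ t s) = Etraj p π h t s (retF r s) := by
  induction h generalizing t s with
  | zero => rfl
  | succ h ih =>
    refine sum_congr rfl fun a _ => sum_congr rfl fun s' _ => ?_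
    have hle : t + 1 + h ≤ T := by omega
    simp only [pdisF, retF, Etraj_const_mul, Etraj_add, Etraj_const hp1 hμ _ hle,
      Etraj_const hp1 hπ _ hle, ih hle]
    linear_combination (p s a s' * (r s a + Etraj p π h (t + 1) s' (retF r s')))
      * mul_div_cancel_of_imp' (hμπ t s a (by omega))

theorem Epdis_eq_vval (hp1 : ∀ s a, ∑ s' : S, p s a s' = 1) (hπ : IsPolicy π T)
    (hμ : IsPolicy μ T) (hμπ : ∀ i s a, i < T → μ i s a = 0 → π i s a = 0)
    {t : ℕ} (ht : t ≤ T) (s : S) :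
    Epdis p r π μ T t s = vval p r π T t s :=
  Etraj_pdisF hp1 hπ hμ hμπ (by omega) s

theorem vval_eq_sum_qval (hp1 : ∀ s a, ∑ s' : S, p s a s' = 1) (hπ : IsPolicy π T)
    {t : ℕ} (ht : t < T) (s : S) :
    vval p r π T t s = ∑ a : A, π t s a * qval p r π T t s a := by
  rw [vval, Etraj_sub_eq_sum ht]
  refine sum_congr rfl fun a _ => ?_
  simp only [retF, Etraj_add, Etraj_const hp1 hπ _ (by omega : t + 1 + (T - (t + 1)) ≤ T), qval,
    vval, mul_add, mul_sum, sum_add_distrib, ← sum_mul]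
  rw [← mul_sum, hp1, mul_one]
  simp only [mul_assoc]

theorem sum_mul_sq_add_vval (hp1 : ∀ s a, ∑ s' : S, p s a s' = 1) {t : ℕ} (ht : t < T)
    (s : S) (a : A) :
    ∑ s' : S, p s a s' * (r s a + vval p r π T (t + 1) s') ^ 2
      = qval p r π T t s a ^ 2 + nuval p r π T t s a := by
  rw [sum_mul_add_sq univ (hp1 s a), qval, nuval]
  split_ifs with h
  · obtain rfl : T = t + 1 := by omega
    simp [vval_self]
  · rfl

theorem hq_eq {t : ℕ} (ht : t < T) (s : S) (a : A) :
    hq p r π T t s a = qval p r π T t s a ^ 2 + nuval p r π T t s a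
      + ∑ s' : S, p s a s' * Vpdis p r π π T (t + 1) s' := by
  rw [hq]
  split_ifs with h
  · obtain rfl : T = t + 1 := by omega
    simp [Vpdis_self, nuval]
  · rfl

theorem Vpdis_eq (hp1 : ∀ s a, ∑ s' : S, p s a s' = 1) (hπ : IsPolicy π T)
    (hμ : IsPolicy μ T) (hμπ : ∀ i s a, i < T → μ i s a = 0 → π i s a = 0)
    {t : ℕ} (ht : t < T) (s : S) :
    Vpdis p r π μ T t s
      = ∑ a : A, μ t s a * (π t s a / μ t s a) ^ 2 * (qval p r π T t s a ^ 2
          + nuval p r π T t s a + ∑ s' : S, p s a s' * Vpdis p r π μ T (t + 1) s')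
        - vval p r π T t s ^ 2 := by
  have hE : ∀ s', Etraj p μ (T - (t + 1)) (t + 1) s' (pdisF r π μ (t + 1) s')
      = vval p r π T (t + 1) s' := Epdis_eq_vval hp1 hπ hμ hμπ ht
  rw [Vpdis, Epdis_eq_vval hp1 hπ hμ hμπ ht.le, Etraj_sub_eq_sum ht]
  congr 1
  refine sum_congr rfl fun a _ => ?_
  rw [← sum_mul_sq_add_vval hp1 ht]
  simp only [pdisF, Vpdis, Epdis, hE,
    Etraj_sq_const_mul_add hp1 hμ (by omega : t + 1 + (T - (t + 1)) ≤ T)]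
  rw [← sum_add_distrib, mul_sum]
  exact sum_congr rfl fun s' _ => by ring

theorem Vpdis_self_eq (hp1 : ∀ s a, ∑ s' : S, p s a s' = 1) (hπ : IsPolicy π T)
    {t : ℕ} (ht : t < T) (s : S) :
    Vpdis p r π π T t s = ∑ a : A, π t s a * hq p r π T t s a - vval p r π T t s ^ 2 := by
  rw [Vpdis_eq hp1 hπ hπ (fun _ _ _ _ h => h) ht]
  congr 1
  refine sum_congr rfl fun a _ => ?_
  rw [hq_eq ht]
  rcases eq_or_ne (π t s a) 0 with h | h <;> simp [h]

end Values

section BehaviorPolicy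

variable {S A : Type*} [Fintype S] [Fintype A] {p : S → A → S → ℝ} {r : S → A → ℝ}
  {K : ℕ} {π : Fin K → ℕ → S → A → ℝ} {T : ℕ}

theorem hmu_isPolicy [Nonempty A] : IsPolicy (hmu p r K π T) T := by
  intro t s _
  refine ⟨fun a => by unfold hmu; split <;> positivity, ?_⟩
  unfold hmu
  split
  · simp
  · rw [← sum_div, div_self ‹_›]

theorem hmu_eq_of_pos [Nonempty A] {t : ℕ} {s : S}
    (hw : ∀ b, 0 < ∑ j : Fin K, wRL p r K π T j t s b) (a : A) :
    hmu p r K π T t s a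
      = √(∑ j : Fin K, wRL p r K π T j t s a) / ∑ b : A, √(∑ j : Fin K, wRL p r K π T j t s b) :=
  if_neg (sum_pos (fun b _ => Real.sqrt_pos.2 (hw b)) univ_nonempty).ne'

theorem hmu_pos [Nonempty A] {t : ℕ} {s : S} (hw : ∀ b, 0 < ∑ j : Fin K, wRL p r K π T j t s b)
    (a : A) : 0 < hmu p r K π T t s a := by
  rw [hmu_eq_of_pos hw]
  exact div_pos (Real.sqrt_pos.2 (hw a)) (sum_pos (fun b _ => Real.sqrt_pos.2 (hw b)) univ_nonempty)

theorem DeltaRL_eq (hp1 : ∀ s a, ∑ s' : S, p s a s' = 1) {k : Fin K} (hπ : IsPolicy (π k) T)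
    {t : ℕ} (ht : t < T) {s : S} (hμ : ∀ a, 0 < hmu p r K π T t s a) :
    DeltaRL p r K π T k t s
      = ∑ a : A, hmu p r K π T t s a * (π k t s a / hmu p r K π T t s a) ^ 2
          * (qval p r (π k) T t s a ^ 2 + nuval p r (π k) T t s a)
        - vval p r (π k) T t s ^ 2 := by
  have hcancel : ∀ a, hmu p r K π T t s a
      * (π k t s a / hmu p r K π T t s a * qval p r (π k) T t s a)
      = π k t s a * qval p r (π k) T t s a := fun a => by
    rw [← mul_assoc, mul_div_cancel₀ _ (hμ a).ne']
  rw [DeltaRL, vval_eq_sum_qval hp1 hπ ht]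
  simp only [hcancel]
  rw [add_sub_assoc', ← sum_add_distrib]
  congr 2
  ext a
  ring

theorem sum_hmu_mul_sq_mul_hq_le [Nonempty A] (hK : 0 < K) {k : Fin K} {t : ℕ} {s : S}
    (hπ : ∀ a, 0 ≤ π k t s a) (hwbar : ∀ a, 0 < (∑ j : Fin K, wRL p r K π T j t s a) / K)
    (hlo : 0 < etaLoRL p r K π T t) :
    ∑ a : A, hmu p r K π T t s a * (π k t s a / hmu p r K π T t s a) ^ 2 * hq p r (π k) T t s a
      ≤ √(etaHiRL p r K π T t / etaLoRL p r K π T t)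
          * (∑ a : A, π k t s a * √(hq p r (π k) T t s a)) ^ 2 := by
  have hKpos : (0 : ℝ) < K := by exact_mod_cast hK
  have hD : ∀ a, 0 < ∑ j : Fin K, wRL p r K π T j t s a :=
    fun a => (div_pos_iff_of_pos_right hKpos).1 (hwbar a)
  have heta : ∀ a, etaRL p r K π T k t s a
      = wRL p r K π T k t s a * K / ∑ j : Fin K, wRL p r K π T j t s a :=
    fun a => div_div_eq_mul_div _ _ _
  calc ∑ a : A, hmu p r K π T t s a * (π k t s a / hmu p r K π T t s a) ^ 2
        * hq p r (π k) T t s a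
      = ∑ a : A, wRL p r K π T k t s a
          / (√(∑ j : Fin K, wRL p r K π T j t s a)
            / ∑ b : A, √(∑ j : Fin K, wRL p r K π T j t s b)) := by
        refine sum_congr rfl fun a _ => ?_
        rw [← hmu_eq_of_pos hD, wRL]
        field_simp [(hmu_pos hD a).ne']
    _ ≤ √(etaHiRL p r K π T t / etaLoRL p r K π T t)
          * (∑ a : A, √(wRL p r K π T k t s a)) ^ 2 :=
        sum_div_normalized_sqrt_le hKpos hlo hD
          (fun a => heta a ▸ ciInf_le (Finite.bddBelow_range _) (k, s, a))
          (fun a => heta a ▸ le_ciSup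
            (f := fun x : Fin K × S × A => etaRL p r K π T x.1 t x.2.1 x.2.2)
            (Finite.bddAbove_range _) (k, s, a))
    _ = _ := by
        simp only [wRL, Real.sqrt_mul (sq_nonneg _), Real.sqrt_sq (hπ _)]

end BehaviorPolicy

section VarianceComparison

variable {S A : Type*} [Fintype S] [Fintype A] [Nonempty A] {p : S → A → S → ℝ}
  {r : S → A → ℝ} {K : ℕ} {π : Fin K → ℕ → S → A → ℝ} {T : ℕ}

theorem mul_Vpdis_hmu_le_of_succ (hp0 : ∀ s a s', 0 ≤ p s a s')
    (hp1 : ∀ s a, ∑ s' : S, p s a s' = 1) (hK : 0 < K) (k : Fin K) (hπ : IsPolicy (π k) T)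
    (hwbar : ∀ t, t < T → ∀ (s : S) (a : A), 0 < (∑ j : Fin K, wRL p r K π T j t s a) / K)
    {t : ℕ} (ht : t < T) (hlo : 0 < etaLoRL p r K π T t) {Nk N : ℝ} (hN : 0 < N) (s : S)
    (hcond : √(etaHiRL p r K π T t / etaLoRL p r K π T t)
          * (∑ a : A, π k t s a * √(hq p r (π k) T t s a)) ^ 2
        - (1 - Nk / N) * DeltaRL p r K π T k t s
        ≤ ∑ a : A, π k t s a * hq p r (π k) T t s a)
    (hsucc : ∀ s', Nk * Vpdis p r (π k) (hmu p r K π T) T (t + 1) s'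
        ≤ N * Vpdis p r (π k) (π k) T (t + 1) s') :
    Nk * Vpdis p r (π k) (hmu p r K π T) T t s ≤ N * Vpdis p r (π k) (π k) T t s := by
  have hμ : ∀ i, i < T → ∀ s a, 0 < hmu p r K π T i s a := fun i hi s =>
    hmu_pos fun a => (div_pos_iff_of_pos_right (by exact_mod_cast hK)).1 (hwbar i hi s a)
  have hoff := Vpdis_eq (r := r) hp1 hπ hmu_isPolicy
    (fun i s a hi h => absurd h (hμ i hi s a).ne') ht s
  have htail : Nk * ∑ a : A, hmu p r K π T t s a * (π k t s a / hmu p r K π T t s a) ^ 2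
        * ∑ s' : S, p s a s' * Vpdis p r (π k) (hmu p r K π T) T (t + 1) s'
      ≤ N * ∑ a : A, hmu p r K π T t s a * (π k t s a / hmu p r K π T t s a) ^ 2
        * ∑ s' : S, p s a s' * Vpdis p r (π k) (π k) T (t + 1) s' := by
    have hpull : ∀ (c : ℝ) (V : S → ℝ), c * ∑ a : A, hmu p r K π T t s a
          * (π k t s a / hmu p r K π T t s a) ^ 2 * ∑ s' : S, p s a s' * V s'
        = ∑ a : A, hmu p r K π T t s a * (π k t s a / hmu p r K π T t s a) ^ 2
          * ∑ s' : S, p s a s' * (c * V s') := fun c V => by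
      simp only [mul_sum]
      exact sum_congr rfl fun a _ => sum_congr rfl fun s' _ => by ring
    rw [hpull, hpull]
    exact sum_le_sum fun a _ => mul_le_mul_of_nonneg_left
      (sum_le_sum fun s' _ => mul_le_mul_of_nonneg_left (hsucc s') (hp0 s a s'))
      (mul_nonneg (hμ t ht s a).le (sq_nonneg _))
  have hkey := mul_le_mul_of_nonneg_left
    (sum_hmu_mul_sq_mul_hq_le hK (fun a => (hπ t s ht).1 a) (hwbar t ht s) hlo) hN.le
  have hscaled : N * (1 - Nk / N) = N - Nk := by field_simp
  have hcond' := mul_le_mul_of_nonneg_left hcond hN.le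
  rw [mul_sub, ← mul_assoc N (1 - Nk / N), hscaled, DeltaRL_eq hp1 hπ ht (hμ t ht s)] at hcond'
  rw [Vpdis_self_eq hp1 hπ ht, hoff]
  -- expanding `ĥq` everywhere puts all the facts over the same atoms
  simp only [hq_eq ht, mul_add, sum_add_distrib] at hkey hcond' ⊢
  linarith

theorem mul_Vpdis_hmu_le (hp0 : ∀ s a s', 0 ≤ p s a s') (hp1 : ∀ s a, ∑ s' : S, p s a s' = 1)
    (hK : 0 < K) (k : Fin K) (hπ : IsPolicy (π k) T)
    (hwbar : ∀ t, t < T → ∀ (s : S) (a : A), 0 < (∑ j : Fin K, wRL p r K π T j t s a) / K)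
    (hlo : ∀ t, t < T → 0 < etaLoRL p r K π T t) {Nk N : ℝ} (hN : 0 < N)
    (hcond : ∀ t, t < T → ∀ s : S,
      √(etaHiRL p r K π T t / etaLoRL p r K π T t)
          * (∑ a : A, π k t s a * √(hq p r (π k) T t s a)) ^ 2
        - (1 - Nk / N) * DeltaRL p r K π T k t s
        ≤ ∑ a : A, π k t s a * hq p r (π k) T t s a)
    {t : ℕ} (ht : t ≤ T) (s : S) :
    Nk * Vpdis p r (π k) (hmu p r K π T) T t s ≤ N * Vpdis p r (π k) (π k) T t s := by
  induction ht using Nat.decreasingInduction generalizing s with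
  | self => simp [Vpdis_self]
  | of_succ t ht ih =>
    exact mul_Vpdis_hmu_le_of_succ hp0 hp1 hK k hπ hwbar ht (hlo t ht) hN s (hcond t ht s) ih

end VarianceComparison

theorem stmt13_general {S A : Type*} [Fintype S] [Fintype A] [Nonempty A]
    (p : S → A → S → ℝ) (r : S → A → ℝ)
    (hp0 : ∀ s a s', 0 ≤ p s a s') (hp1 : ∀ s a, ∑ s' : S, p s a s' = 1)
    (T : ℕ)
    (K : ℕ) (hK : 0 < K) (π : Fin K → ℕ → S → A → ℝ)
    (hπ : ∀ k t s, t < T → (∀ a, 0 ≤ π k t s a) ∧ (∑ a : A, π k t s a = 1))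
    (hwbar : ∀ t, t < T → ∀ (s : S) (a : A),
      0 < (∑ j : Fin K, wRL p r K π T j t s a) / K)
    (hlo : ∀ t, t < T → 0 < etaLoRL p r K π T t)
    (nk : Fin K → ℕ) (hnk : ∀ k, 0 < nk k) (n : ℕ) (hn : n = ∑ k : Fin K, nk k)
    (hcond : ∀ (k : Fin K) (t : ℕ), t < T → ∀ s : S,
      Real.sqrt (etaHiRL p r K π T t / etaLoRL p r K π T t) *
          (∑ a : A, π k t s a * Real.sqrt (hq p r (π k) T t s a)) ^ 2
        - (1 - (nk k : ℝ) / (n : ℝ)) * DeltaRL p r K π T k t s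
        ≤ ∑ a : A, π k t s a * hq p r (π k) T t s a) :
    ∀ (k : Fin K) (t : ℕ), t < T → ∀ s : S,
      (1 / (n : ℝ)) * Vpdis p r (π k) (hmu p r K π T) T t s
        ≤ (1 / (nk k : ℝ)) * Vpdis p r (π k) (π k) T t s := by
  intro k t ht s
  have hnk_pos : (0 : ℝ) < nk k := by exact_mod_cast hnk k
  have hn_pos : (0 : ℝ) < n := by
    have : nk k ≤ n := hn ▸ single_le_sum (fun j _ => (hnk j).le) (mem_univ k)
    exact_mod_cast (hnk k).trans_le this
  rw [one_div_mul_eq_div, one_div_mul_eq_div, div_le_div_iff₀ hn_pos hnk_pos, mul_comm,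
    mul_comm _ (n : ℝ)]
  exact mul_Vpdis_hmu_le hp0 hp1 hK k (hπ k) hwbar hlo hn_pos (hcond k) ht.le s

/-- variance reduction with the same total sample size (RL setting): under the
similarity condition, for every `k`, `t ∈ {0,…,T-1}` and state `s`,
`V(E^{off,π^(k)}_{t:T-1} | S_t = s) ≤ V(E^{on,π^(k)}_{t:T-1} | S_t = s)`, i.e.
`(1/n) V(G^PDIS_k(τ^{ĥμ_{t:T-1}}) | S_t = s) ≤ (1/n_k) V(G^PDIS_k(τ^{π^(k)_{t:T-1}}) | S_t = s)`. -/
theorem stmt13 {S A : Type*} [Fintype S] [Fintype A] [Nonempty S] [Nonempty A]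
    (p : S → A → S → ℝ) (r : S → A → ℝ)
    (hp0 : ∀ s a s', 0 ≤ p s a s') (hp1 : ∀ s a, ∑ s' : S, p s a s' = 1)
    (T : ℕ) (hT : 1 ≤ T)
    (K : ℕ) (hK : 0 < K) (π : Fin K → ℕ → S → A → ℝ)
    (hπ : ∀ k t s, t < T → (∀ a, 0 ≤ π k t s a) ∧ (∑ a : A, π k t s a = 1))
    (hwbar : ∀ t, t < T → ∀ (s : S) (a : A),
      0 < (∑ j : Fin K, wRL p r K π T j t s a) / K)
    (hlo : ∀ t, t < T → 0 < etaLoRL p r K π T t)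
    (nk : Fin K → ℕ) (hnk : ∀ k, 0 < nk k) (n : ℕ) (hn : n = ∑ k : Fin K, nk k)
    (hcond : ∀ (k : Fin K) (t : ℕ), t < T → ∀ s : S,
      Real.sqrt (etaHiRL p r K π T t / etaLoRL p r K π T t) *
          (∑ a : A, π k t s a * Real.sqrt (hq p r (π k) T t s a)) ^ 2
        - (1 - (nk k : ℝ) / (n : ℝ)) * DeltaRL p r K π T k t s
        ≤ ∑ a : A, π k t s a * hq p r (π k) T t s a) :
    ∀ (k : Fin K) (t : ℕ), t < T → ∀ s : S,
      (1 / (n : ℝ)) * Vpdis p r (π k) (hmu p r K π T) T t s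
        ≤ (1 / (nk k : ℝ)) * Vpdis p r (π k) (π k) T t s :=
  stmt13_general p r hp0 hp1 T K hK π hπ hwbar hlo nk hnk n hn hcond
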